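/- arXiv:2210.03356 — 5 statements merged into one kernel-verified Lean document; each statement's English description precedes it below -/
import Mathlib

section
/- Let X be an invertible complex n×n matrix with R = I - X² satisfying ‖R‖ < 1 for a submultiplicative matrix norm. Then with Y = (1/2)(X + X⁻¹) and R' = I - Y², we have R' = -(1/4)R²(I - R)⁻¹. -/
open Matrix

theorem newton_residual_closed_form {n : ℕ} (X : Matrix (Fin n) (Fin n) ℂ)
    [Invertible X]
    (N : Matrix (Fin n) (Fin n) ℂ → ℝ)
    (hN0 : ∀ M, 0 ≤ N M)
    (hNadd : ∀ A B, N (A + B) ≤ N A + N B)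
    (hNsmul : ∀ (c : ℂ) M, N (c • M) = ‖c‖ * N M)
    (hNmul : ∀ A B, N (A * B) ≤ N A * N B)
    (hNzero : ∀ M, N M = 0 ↔ M = 0)
    (R Y R' : Matrix (Fin n) (Fin n) ℂ)
    (hR : R = 1 - X ^ 2) (hRnorm : N R < 1)
    (hY : Y = ((1:ℂ)/2) • (X + X⁻¹)) (hR' : R' = 1 - Y ^ 2) :
    R' = -(((1:ℂ)/4) • (R ^ 2 * (1 - R)⁻¹)) := by
  subst hR hY hR'
  have hXi : X⁻¹ = ⅟X := (invOf_eq_nonsing_inv X).symm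
  have hinv : (1 - (1 - X ^ 2))⁻¹ = ⅟X * ⅟X := by
    rw [sub_sub_cancel]
    rw [show (⅟X * ⅟X : Matrix (Fin n) (Fin n) ℂ) = ⅟(X^2) by rw [invOf_pow, sq]]
    exact (invOf_eq_nonsing_inv _).symm
  rw [hXi, hinv]
  have h1 : X * ⅟X = 1 := mul_invOf_self X
  have h2 : ⅟X * X = 1 := invOf_mul_self X
  have h3 : X * X * (⅟X * ⅟X) = 1 := by
    rw [mul_assoc, ← mul_assoc X (⅟X), h1, one_mul, h1]
  have h4 : X * X * (X * X) * (⅟X * ⅟X) = X * X := by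
    rw [mul_assoc, h3, mul_one]
  simp only [sq, smul_mul_smul_comm]
  rw [mul_add, add_mul, add_mul, h1, h2]
  rw [show (1 - X * X) * (1 - X * X) * (⅟X * ⅟X)
      = (1 - (X * X + X * X) + X * X * (X * X)) * (⅟X * ⅟X) by noncomm_ring]
  rw [add_mul, sub_mul, one_mul, add_mul, h3, h4]
  module
end

section
/- Let X be an invertible complex n×n matrix with R = I - X² and ‖R‖ < 1 for a submultiplicative norm. Then the Newton residual R' = I - ((1/2)(X + X⁻¹))² satisfies ‖R'‖ ≤ (1/4)‖R‖²/(1 - ‖R‖). -/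
open Matrix

theorem newton_residual_norm_bound {n : ℕ} (X : Matrix (Fin n) (Fin n) ℂ)
    [Invertible X]
    (N : Matrix (Fin n) (Fin n) ℂ → ℝ)
    (hN0 : ∀ M, 0 ≤ N M)
    (hNadd : ∀ A B, N (A + B) ≤ N A + N B)
    (hNsmul : ∀ (c : ℂ) M, N (c • M) = ‖c‖ * N M)
    (hNmul : ∀ A B, N (A * B) ≤ N A * N B)
    (hNzero : ∀ M, N M = 0 ↔ M = 0)
    (R R' : Matrix (Fin n) (Fin n) ℂ)
    (hR : R = 1 - X ^ 2) (hRnorm : N R < 1)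
    (hR' : R' = 1 - (((1:ℂ)/2) • (X + X⁻¹)) ^ 2) :
    N R' ≤ (1/4) * (N R) ^ 2 / (1 - N R) := by
  set Y := X⁻¹ with hY
  have h1 : X * Y = 1 := Matrix.mul_inv_of_invertible X
  have h2 : Y * X = 1 := Matrix.inv_mul_of_invertible X
  set T := Y * Y * R ^ 2 with hTdef
  have hYYX2 : Y * Y * X ^ 2 = 1 := by
    rw [pow_two, ← mul_assoc, mul_assoc Y Y X, h2, mul_one, h2]
  have hX2T : X ^ 2 * T = R ^ 2 := by
    rw [hTdef, ← mul_assoc]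
    rw [show X ^ 2 * (Y * Y) = 1 by
      rw [pow_two, mul_assoc, ← mul_assoc X Y Y, h1, one_mul, h1], one_mul]
  have hT : T = R ^ 2 + R * T := by
    have hRT : R * T = T - R ^ 2 := by
      conv_lhs => rw [hR]
      rw [sub_mul, one_mul, hX2T]
    rw [hRT]; abel
  -- key identity R' = -(1/4) • T
  have hsq : (X + Y) ^ 2 = X ^ 2 + 2 • (1 : Matrix (Fin n) (Fin n) ℂ) + Y * Y := by
    rw [pow_two, mul_add, add_mul, add_mul, h1, h2, pow_two]
    abel
  have hT2 : T = Y * Y - 2 • (1 : Matrix (Fin n) (Fin n) ℂ) + X ^ 2 := by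
    have e : (1 - X ^ 2) ^ 2 = 1 - 2 • X ^ 2 + X ^ 2 * X ^ 2 := by
      rw [pow_two, mul_sub, sub_mul, sub_mul, two_smul]
      simp only [one_mul, mul_one]
      abel
    rw [hTdef, hR, e, mul_add, mul_sub, mul_one, mul_smul_comm, hYYX2,
      ← mul_assoc, hYYX2, one_mul]
  have hR'T : R' = (-(1/4) : ℂ) • T := by
    rw [hR', smul_pow, hsq, hT2]
    module
  have hNT : N T ≤ N R * N R + N R * N T := by
    calc N T = N (R ^ 2 + R * T) := by rw [← hT]
    _ ≤ N (R ^ 2) + N (R * T) := hNadd _ _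
    _ ≤ N R * N R + N R * N T := by
        refine add_le_add ?_ (hNmul _ _)
        rw [pow_two]; exact hNmul R R
  have hR'N : N R' = (1/4) * N T := by
    rw [hR'T, hNsmul]
    norm_num
  have h1R : (0:ℝ) < 1 - N R := by linarith
  rw [hR'N, le_div_iff₀ h1R]
  nlinarith [hNT, hN0 T, hN0 R]
end

section
/- Let X be a complex n×n matrix with R = I - X². Then the Newton–Schulz residual R' = I - ((1/2)X(3I - X²))² satisfies ‖R'‖ ≤ (3/4)‖R‖² + (1/4)‖R‖³ for any submultiplicative matrix norm. -/
open Matrix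

theorem newton_schulz_residual_norm_bound {n : ℕ} (X : Matrix (Fin n) (Fin n) ℂ)
    (N : Matrix (Fin n) (Fin n) ℂ → ℝ)
    (hN0 : ∀ M, 0 ≤ N M)
    (hNadd : ∀ A B, N (A + B) ≤ N A + N B)
    (hNsmul : ∀ (c : ℂ) M, N (c • M) = ‖c‖ * N M)
    (hNmul : ∀ A B, N (A * B) ≤ N A * N B)
    (hNzero : ∀ M, N M = 0 ↔ M = 0)
    (R R' : Matrix (Fin n) (Fin n) ℂ)
    (hR : R = 1 - X ^ 2)
    (hR' : R' = 1 - (((1:ℂ)/2) • (X * (3 - X ^ 2))) ^ 2) :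
    N R' ≤ (3/4) * (N R) ^ 2 + (1/4) * (N R) ^ 3 := by
  have key : R' = ((3:ℂ)/4) • R ^ 2 + ((1:ℂ)/4) • R ^ 3 := by
    subst hR hR'
    have e1 : (X * (3 - X ^ 2)) ^ 2 = (9:ℂ)•X^2 - (6:ℂ)•X^4 + X^6 := by
      simp only [Algebra.smul_def, map_ofNat]; noncomm_ring
    have e2 : (1 - X ^ 2) ^ 2 = 1 - (2:ℂ)•X^2 + X^4 := by
      simp only [Algebra.smul_def, map_ofNat]; noncomm_ring
    have e3 : (1 - X ^ 2) ^ 3 = 1 - (3:ℂ)•X^2 + (3:ℂ)•X^4 - X^6 := by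
      simp only [Algebra.smul_def, map_ofNat]; noncomm_ring
    rw [smul_pow, e1, e2, e3]
    module
  rw [key]
  have h2 : N (R ^ 2) ≤ N R ^ 2 := by
    rw [pow_two, pow_two]; exact hNmul R R
  have h3 : N (R ^ 3) ≤ N R ^ 3 := by
    calc N (R ^ 3) = N (R * R ^ 2) := by rw [show R * R ^ 2 = R ^ 3 by noncomm_ring]
    _ ≤ N R * N (R ^ 2) := hNmul _ _
    _ ≤ N R * N R ^ 2 := by
        exact mul_le_mul_of_nonneg_left h2 (hN0 R)
    _ = N R ^ 3 := by ring
  calc N (((3:ℂ)/4) • R ^ 2 + ((1:ℂ)/4) • R ^ 3)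
      ≤ N (((3:ℂ)/4) • R ^ 2) + N (((1:ℂ)/4) • R ^ 3) := hNadd _ _
    _ = (3/4) * N (R ^ 2) + (1/4) * N (R ^ 3) := by
        rw [hNsmul, hNsmul]; norm_num
    _ ≤ (3/4) * N R ^ 2 + (1/4) * N R ^ 3 := by
        gcongr <;> norm_num
end

section
/- Let A be an invertible complex n×n matrix with ‖I - A²‖ < 1 for a submultiplicative norm. Define X₀ = A and X_{k+1} = (1/2)X_k(3I - X_k²). Then ‖I - X_k²‖ ≤ ‖I - A²‖^{2^k} for all k ≥ 0; in particular X_k² → I. -/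
/-!
Writing `R = 1 - X²`, one Newton–Schulz step gives `4 (1 - X'²) = 3 R² + R³`, a polynomial
identity in `X`. For a submultiplicative seminorm with `‖R‖ ≤ 1` this yields
`‖1 - X'²‖ ≤ (3‖R‖² + ‖R‖³) / 4 ≤ ‖R‖²`, so the residual is squared at every step.
-/

open Filter

open Polynomial in
theorem four_sub_mul_three_sub_sq_sq {A : Type*} [Ring A] (x : A) :
    4 - (x * (3 - x ^ 2)) ^ 2 = 3 * (1 - x ^ 2) ^ 2 + (1 - x ^ 2) ^ 3 := by
  have h : (4 - (X * (3 - X ^ 2)) ^ 2 : ℤ[X]) = 3 * (1 - X ^ 2) ^ 2 + (1 - X ^ 2) ^ 3 := by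
    ring
  simpa [map_ofNat] using congrArg (aeval x) h

section Submultiplicative

variable {𝕜 A : Type*} [SeminormedRing 𝕜] [Ring A] [Module 𝕜 A]

theorem Seminorm.map_pow_le_pow_of_submultiplicative (p : Seminorm 𝕜 A)
    (hp : ∀ a b, p (a * b) ≤ p a * p b) (a : A) {n : ℕ} (hn : n ≠ 0) : p (a ^ n) ≤ p a ^ n := by
  induction n with
  | zero => exact absurd rfl hn
  | succ n ih =>
    rcases eq_or_ne n 0 with rfl | hn'
    · simp
    calc p (a ^ (n + 1)) ≤ p (a ^ n) * p a := pow_succ a n ▸ hp _ _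
      _ ≤ p a ^ n * p a := by grw [ih hn']
      _ = p a ^ (n + 1) := (pow_succ _ _).symm

end Submultiplicative

section NewtonSchulz

variable (𝕜 : Type*) {A : Type*} [RCLike 𝕜] [Ring A] [Algebra 𝕜 A]

def newtonSchulzStep (x : A) : A := ((1 : 𝕜) / 2) • (x * (3 - x ^ 2))

theorem four_smul_one_sub_newtonSchulzStep_sq (x : A) :
    (4 : 𝕜) • (1 - newtonSchulzStep 𝕜 x ^ 2) =
      (3 : 𝕜) • (1 - x ^ 2) ^ 2 + (1 - x ^ 2) ^ 3 := by
  have h : (4 : 𝕜) • newtonSchulzStep 𝕜 x ^ 2 = (x * (3 - x ^ 2)) ^ 2 := by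
    rw [newtonSchulzStep, smul_pow, smul_smul]
    norm_num
  rw [smul_sub, h]
  simpa only [Algebra.smul_def, map_ofNat, mul_one] using four_sub_mul_three_sub_sq_sq x

variable {𝕜} (p : Seminorm 𝕜 A) (hp : ∀ a b, p (a * b) ≤ p a * p b)
include hp

theorem Seminorm.one_sub_newtonSchulzStep_sq_le {x : A} (hx : p (1 - x ^ 2) ≤ 1) :
    p (1 - newtonSchulzStep 𝕜 x ^ 2) ≤ p (1 - x ^ 2) ^ 2 := by
  set R := 1 - x ^ 2
  have hR2 := p.map_pow_le_pow_of_submultiplicative hp R two_ne_zero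
  have hR3 := p.map_pow_le_pow_of_submultiplicative hp R three_ne_zero
  have hR0 := apply_nonneg p R
  have h4 : 4 * p (1 - newtonSchulzStep 𝕜 x ^ 2) ≤ 3 * p R ^ 2 + p R ^ 3 := by
    calc 4 * p (1 - newtonSchulzStep 𝕜 x ^ 2)
        = p ((4 : 𝕜) • (1 - newtonSchulzStep 𝕜 x ^ 2)) := by
          rw [map_smul_eq_mul, RCLike.norm_ofNat]
      _ = p ((3 : 𝕜) • R ^ 2 + R ^ 3) := by rw [four_smul_one_sub_newtonSchulzStep_sq]
      _ ≤ 3 * p (R ^ 2) + p (R ^ 3) := by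
          grw [map_add_le_add, map_smul_eq_mul, RCLike.norm_ofNat]
      _ ≤ 3 * p R ^ 2 + p R ^ 3 := by gcongr
  nlinarith [pow_le_pow_of_le_one hR0 hx (show 2 ≤ 3 by norm_num)]

theorem Seminorm.one_sub_newtonSchulz_sq_le_pow_two_pow {X : ℕ → A}
    (hX : ∀ k, X (k + 1) = newtonSchulzStep 𝕜 (X k)) (h0 : p (1 - X 0 ^ 2) ≤ 1) (k : ℕ) :
    p (1 - X k ^ 2) ≤ p (1 - X 0 ^ 2) ^ 2 ^ k := by
  induction k with
  | zero => simp
  | succ k ih =>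
    have hk : p (1 - X k ^ 2) ≤ 1 := ih.trans (pow_le_one₀ (apply_nonneg _ _) h0)
    calc p (1 - X (k + 1) ^ 2) ≤ p (1 - X k ^ 2) ^ 2 :=
          hX k ▸ p.one_sub_newtonSchulzStep_sq_le hp hk
      _ ≤ (p (1 - X 0 ^ 2) ^ 2 ^ k) ^ 2 := by gcongr
      _ = p (1 - X 0 ^ 2) ^ 2 ^ (k + 1) := by rw [← pow_mul, ← pow_succ]

end NewtonSchulz

theorem newton_schulz_quadratic_convergence_general {n : ℕ}
    (A : Matrix (Fin n) (Fin n) ℂ)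
    (N : Matrix (Fin n) (Fin n) ℂ → ℝ)
    (hNadd : ∀ M₁ M₂, N (M₁ + M₂) ≤ N M₁ + N M₂)
    (hNsmul : ∀ (c : ℂ) M, N (c • M) = ‖c‖ * N M)
    (hNmul : ∀ M₁ M₂, N (M₁ * M₂) ≤ N M₁ * N M₂)
    (hA : N (1 - A ^ 2) < 1)
    (X : ℕ → Matrix (Fin n) (Fin n) ℂ)
    (hX0 : X 0 = A)
    (hXs : ∀ k, X (k + 1) = ((1:ℂ)/2) • (X k * (3 - X k ^ 2))) :
    (∀ k, N (1 - X k ^ 2) ≤ N (1 - A ^ 2) ^ (2 ^ k))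
    ∧ Tendsto (fun k => N (1 - X k ^ 2)) atTop (nhds 0) := by
  let p : Seminorm ℂ (Matrix (Fin n) (Fin n) ℂ) := Seminorm.of N hNadd hNsmul
  subst hX0
  have bound : ∀ k, N (1 - X k ^ 2) ≤ N (1 - X 0 ^ 2) ^ 2 ^ k :=
    p.one_sub_newtonSchulz_sq_le_pow_two_pow hNmul hXs hA.le
  have hlim : Tendsto (fun k => N (1 - X 0 ^ 2) ^ 2 ^ k) atTop (nhds 0) :=
    (tendsto_pow_atTop_nhds_zero_of_lt_one (apply_nonneg p _) hA).comp
      (tendsto_pow_atTop_atTop_of_one_lt one_lt_two)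
  exact ⟨bound, squeeze_zero (fun k => apply_nonneg p _) bound hlim⟩

theorem newton_schulz_quadratic_convergence {n : ℕ}
    (A : Matrix (Fin n) (Fin n) ℂ) [Invertible A]
    (N : Matrix (Fin n) (Fin n) ℂ → ℝ)
    (hN0 : ∀ M, 0 ≤ N M)
    (hNadd : ∀ M₁ M₂, N (M₁ + M₂) ≤ N M₁ + N M₂)
    (hNsmul : ∀ (c : ℂ) M, N (c • M) = ‖c‖ * N M)
    (hNmul : ∀ M₁ M₂, N (M₁ * M₂) ≤ N M₁ * N M₂)
    (hNzero : ∀ M, N M = 0 ↔ M = 0)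
    (hA : N (1 - A ^ 2) < 1)
    (X : ℕ → Matrix (Fin n) (Fin n) ℂ)
    (hX0 : X 0 = A)
    (hXs : ∀ k, X (k + 1) = ((1:ℂ)/2) • (X k * (3 - X k ^ 2))) :
    (∀ k, N (1 - X k ^ 2) ≤ N (1 - A ^ 2) ^ (2 ^ k))
    ∧ Tendsto (fun k => N (1 - X k ^ 2)) atTop (nhds 0) :=
  newton_schulz_quadratic_convergence_general A N hNadd hNsmul hNmul hA X hX0 hXs
end

section
/- Let x be a complex number with Re(x) ≠ 0 and define the Newton iteration x₀ = x, x_{k+1} = (1/2)(x_k + 1/x_k). Then every iterate has Re(x_k) of the same sign as Re(x), all x_k are nonzero, and x_k → sign(x) (= 1 if Re(x) > 0, -1 if Re(x) < 0); moreover |x_{k+1} - s| = |x_k - s|²/(2|x_k|) where s = sign(x). -/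
/-!
With `s² = 1`, the Newton step `N z = (z + z⁻¹)/2` satisfies `N z ∓ s = (z ∓ s)² / (2z)`, so the
Cayley transform `r = (z - s)/(z + s)` is squared by each step: `r_k = r_0 ^ 2 ^ k`. For `s = ±1`,
`|z - s| < |z + s|` exactly when `Re z` has the sign of `s`, so `|r_0| < 1`, hence `r_k → 0` and
`z_k → s`. The sign of `Re z` is preserved because `Re z⁻¹ = Re z / |z|²`.
-/

open Filter Topology

def signNewtonStep {K : Type*} [Field K] (z : K) : K := 1 / 2 * (z + z⁻¹)

def cayley {K : Type*} [Field K] (s z : K) : K := (z - s) / (z + s)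

section Field

variable {K : Type*} [Field K] [NeZero (2 : K)] {s z : K}

theorem signNewtonStep_sub (hs : s ^ 2 = 1) (hz : z ≠ 0) :
    signNewtonStep z - s = (z - s) ^ 2 / (2 * z) := by
  unfold signNewtonStep
  field_simp
  linear_combination -hs

theorem cayley_signNewtonStep (hs : s ^ 2 = 1) (hz : z ≠ 0) :
    cayley s (signNewtonStep z) = cayley s z ^ 2 := by
  have hadd : signNewtonStep z + s = (z + s) ^ 2 / (2 * z) := by
    simpa only [sub_neg_eq_add] using signNewtonStep_sub (s := -s) (by rwa [neg_sq]) hz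
  rw [cayley, cayley, signNewtonStep_sub hs hz, hadd, div_pow,
    div_div_div_cancel_right₀ (mul_ne_zero two_ne_zero hz)]

theorem cayley_signNewtonStep_iterate (hs : s ^ 2 = 1)
    (hz : ∀ n, signNewtonStep^[n] z ≠ 0) (n : ℕ) :
    cayley s (signNewtonStep^[n] z) = cayley s z ^ 2 ^ n := by
  induction n with
  | zero => simp
  | succ n ih =>
    rw [Function.iterate_succ_apply', cayley_signNewtonStep hs (hz n), ih, ← pow_mul, pow_succ]

theorem mul_one_add_cayley_div_one_sub_cayley (hs : s ≠ 0) (hz : z + s ≠ 0) :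
    s * (1 + cayley s z) / (1 - cayley s z) = z := by
  have hplus : 1 + cayley s z = 2 * z / (z + s) := by
    rw [cayley]; field_simp; ring
  have hminus : 1 - cayley s z = 2 * s / (z + s) := by
    rw [cayley]; field_simp; ring
  rw [hplus, hminus]
  field_simp

end Field

theorem tendsto_of_tendsto_cayley {K : Type*} [NormedField K] [NeZero (2 : K)] {s : K}
    {w : ℕ → K} (hs : s ≠ 0) (hw : ∀ n, w n + s ≠ 0)
    (h : Tendsto (fun n => cayley s (w n)) atTop (𝓝 0)) :
    Tendsto w atTop (𝓝 s) := by
  have hinv : Tendsto (fun r : K => s * (1 + r) / (1 - r)) (𝓝 0) (𝓝 s) := by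
    simpa using (show ContinuousAt (fun r : K => s * (1 + r) / (1 - r)) 0 by
      fun_prop (disch := norm_num)).tendsto
  exact (hinv.comp h).congr fun n => mul_one_add_cayley_div_one_sub_cayley hs (hw n)

theorem norm_signNewtonStep_sub {𝕜 : Type*} [RCLike 𝕜] {s z : 𝕜} (hs : s ^ 2 = 1)
    (hz : z ≠ 0) : ‖signNewtonStep z - s‖ = ‖z - s‖ ^ 2 / (2 * ‖z‖) := by
  rw [signNewtonStep_sub hs hz, norm_div, norm_mul, norm_pow, RCLike.norm_two]

namespace Complex

theorem re_signNewtonStep_mul_pos {z : ℂ} {a : ℝ} (h : 0 < z.re * a) :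
    0 < (signNewtonStep z).re * a := by
  have hz : 0 < normSq z := normSq_pos.2 fun h0 => by simp [h0] at h
  have hre : (signNewtonStep z).re * a = (z.re * a + z.re * a / normSq z) / 2 := by
    simp [signNewtonStep, inv_re]
    ring
  rw [hre]
  positivity

theorem re_signNewtonStep_iterate_mul_pos {z : ℂ} {a : ℝ} (h : 0 < z.re * a) (n : ℕ) :
    0 < (signNewtonStep^[n] z).re * a := by
  induction n with
  | zero => exact h
  | succ n ih => rw [Function.iterate_succ_apply']; exact re_signNewtonStep_mul_pos ih

theorem norm_sub_lt_norm_add_of_re_mul_pos {z s : ℂ} (hs : s.im = 0) (h : 0 < z.re * s.re) :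
    ‖z - s‖ < ‖z + s‖ := by
  refine lt_of_pow_lt_pow_left₀ 2 (norm_nonneg _) ?_
  simp only [Complex.sq_norm, normSq_apply, sub_re, sub_im, add_re, add_im, hs]
  nlinarith

theorem tendsto_signNewtonStep_iterate {z s : ℂ} (hs : s ^ 2 = 1) (h : 0 < z.re * s.re) :
    Tendsto (fun n => signNewtonStep^[n] z) atTop (𝓝 s) := by
  have hs_im : s.im = 0 := by rcases sq_eq_one_iff.1 hs with rfl | rfl <;> simp
  have hlt n :=
    norm_sub_lt_norm_add_of_re_mul_pos hs_im (re_signNewtonStep_iterate_mul_pos h n)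
  have hne n : signNewtonStep^[n] z ≠ 0 := fun h0 => by
    simpa [h0] using re_signNewtonStep_iterate_mul_pos h n
  have hc : ‖cayley s z‖ < 1 := by
    have h0 : ‖z - s‖ < ‖z + s‖ := hlt 0
    rwa [cayley, norm_div, div_lt_one ((norm_nonneg _).trans_lt h0)]
  refine tendsto_of_tendsto_cayley (by rintro rfl; simp at hs)
    (fun n => norm_pos_iff.1 ((norm_nonneg _).trans_lt (hlt n))) ?_
  simp_rw [cayley_signNewtonStep_iterate hs hne]
  exact (tendsto_pow_atTop_nhds_zero_of_norm_lt_one hc).comp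
    (tendsto_pow_atTop_atTop_of_one_lt one_lt_two)

end Complex

theorem scalar_newton_sign_convergence (x : ℂ) (hx : x.re ≠ 0)
    (z : ℕ → ℂ) (hz0 : z 0 = x)
    (hzs : ∀ k, z (k + 1) = (1/2) * (z k + (z k)⁻¹))
    (s : ℂ) (hs : s = if 0 < x.re then 1 else -1) :
    (∀ k, 0 < (z k).re * x.re)
    ∧ (∀ k, z k ≠ 0)
    ∧ Tendsto z atTop (nhds s)
    ∧ (∀ k, ‖z (k + 1) - s‖
        = ‖z k - s‖ ^ 2 / (2 * ‖z k‖)) := by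
  have hz : z = fun k => signNewtonStep^[k] x := by
    funext k
    induction k with
    | zero => exact hz0
    | succ k ih => rw [hzs, ih, Function.iterate_succ_apply']; rfl
  have hs2 : s ^ 2 = 1 := by rw [hs]; split_ifs <;> norm_num
  have hxs : 0 < x.re * s.re := by
    rw [hs]
    split_ifs with hpos
    · simpa using hpos
    · simpa using lt_of_le_of_ne (not_lt.1 hpos) hx
  have hre k : 0 < (z k).re * x.re :=
    hz ▸ Complex.re_signNewtonStep_iterate_mul_pos (mul_self_pos.2 hx) k
  have hne k : z k ≠ 0 := fun h0 => by simpa [h0] using hre k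
  exact ⟨hre, hne, hz ▸ Complex.tendsto_signNewtonStep_iterate hs2 hxs,
    fun k => hzs k ▸ norm_signNewtonStep_sub hs2 (hne k)⟩
end
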